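/- arXiv:2303.04369 — 7 statements merged into one kernel-verified Lean document; each statement's English description precedes it below -/
import Mathlib

section
/- Let (Ω, F, P) be a probability space, G ⊆ F a sub-σ-algebra, and ξ, η : Ω → ℝ^d square-integrable random variables. Then E[W₂(L_{ξ|G}, L_{η|G})²] ≤ E[E(|ξ − η|² | G)] = E[|ξ − η|²]. -/
/-! Let `κ` be the regular conditional distribution of the pair `(ξ, η)` given `G`. Its marginals
are again regular conditional distributions of `ξ` and of `η`, and such versions are unique almost
surely, so for almost every `ω` the measure `κ ω` is a coupling of `L_{ξ|G}(ω)` and `L_{η|G}(ω)`.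
Hence `W₂(L_{ξ|G}, L_{η|G})² ≤ ∫ |x - y|² dκ` almost surely, and integrating over `P`
disintegrates the right-hand side back into `E|ξ - η|²`. -/

open MeasureTheory ProbabilityTheory ENNReal

/-- The squared `L²`-Wasserstein distance between two measures:
`W₂(μ,ν)² = inf { ∫ dist(x,y)² dπ : π a coupling of μ and ν }`. -/
noncomputable def W2sq {E : Type*} [MeasurableSpace E] [PseudoEMetricSpace E]
    (μ ν : Measure E) : ℝ≥0∞ :=
  ⨅ π ∈ {π : Measure (E × E) | IsProbabilityMeasure π ∧
      π.map Prod.fst = μ ∧ π.map Prod.snd = ν},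
    ∫⁻ p, edist p.1 p.2 ^ 2 ∂π

namespace ProbabilityTheory

section CondDistrib

variable {α β E : Type*} {mα : MeasurableSpace α} {mβ : MeasurableSpace β} [MeasurableSpace E]
  {μ : Measure α} {X : α → β} {Y : α → E}

def IsCondDistrib (κ : Kernel β E) (Y : α → E) (X : α → β) (μ : Measure α) : Prop :=
  ∀ A : Set E, MeasurableSet A → ∀ t : Set β, MeasurableSet t →
    ∫⁻ a in X ⁻¹' t, κ (X a) A ∂μ = μ (X ⁻¹' t ∩ Y ⁻¹' A)

lemma IsCondDistrib.map_prodMk_eq_compProd [IsFiniteMeasure μ] {κ : Kernel β E}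
    [IsSFiniteKernel κ] (hκ : IsCondDistrib κ Y X μ) (hX : Measurable X) (hY : Measurable Y) :
    μ.map (fun a => (X a, Y a)) = μ.map X ⊗ₘ κ := by
  have hrect : ∀ t, MeasurableSet t → ∀ A, MeasurableSet A →
      μ.map (fun a => (X a, Y a)) (t ×ˢ A) = (μ.map X ⊗ₘ κ) (t ×ˢ A) := by
    intro t ht A hA
    rw [Measure.map_apply (hX.prodMk hY) (ht.prod hA), Measure.compProd_apply_prod ht hA,
      Set.mk_preimage_prod, ← hκ A hA t ht, Measure.restrict_map hX ht,
      lintegral_map (κ.measurable_coe hA) hX]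
  refine ext_of_generate_finite _ generateFrom_prod.symm isPiSystem_prod ?_ ?_
  · rintro _ ⟨t, ht, A, hA, rfl⟩
    exact hrect t ht A hA
  · simpa using hrect _ .univ _ .univ

variable [StandardBorelSpace E] [Nonempty E]

lemma IsCondDistrib.condDistrib_ae_eq [IsFiniteMeasure μ] {κ : Kernel β E} [IsFiniteKernel κ]
    (hκ : IsCondDistrib κ Y X μ) (hX : Measurable X) (hY : Measurable Y) :
    condDistrib Y X μ =ᵐ[μ.map X] κ :=
  condDistrib_ae_eq_of_measure_eq_compProd_of_measurable hX hY
    (hκ.map_prodMk_eq_compProd hX hY)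

lemma lintegral_lintegral_condDistrib [IsFiniteMeasure μ] (hX : Measurable X)
    (hY : Measurable Y) {f : E → ℝ≥0∞} (hf : Measurable f) :
    ∫⁻ a, ∫⁻ y, f y ∂(condDistrib Y X μ (X a)) ∂μ = ∫⁻ a, f (Y a) ∂μ := by
  rw [← lintegral_map hf.lintegral_kernel hX,
    ← Measure.lintegral_compProd (f := fun p => f p.2) (hf.comp measurable_snd),
    compProd_map_condDistrib hY.aemeasurable]
  exact lintegral_map (hf.comp measurable_snd) (hX.prodMk hY)

end CondDistrib

lemma W2sq_le_lintegral_of_coupling {E : Type*} [MeasurableSpace E] [PseudoEMetricSpace E]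
    {μ ν : Measure E} (π : Measure (E × E)) [IsProbabilityMeasure π]
    (hfst : π.map Prod.fst = μ) (hsnd : π.map Prod.snd = ν) :
    W2sq μ ν ≤ ∫⁻ p, edist p.1 p.2 ^ 2 ∂π :=
  iInf₂_le π ⟨inferInstance, hfst, hsnd⟩

theorem lintegral_W2sq_le_of_isCondDistrib {α β E : Type*} {mα : MeasurableSpace α}
    {mβ : MeasurableSpace β} [PseudoEMetricSpace E] [MeasurableSpace E] [BorelSpace E]
    [PolishSpace E] [Nonempty E] {μ : Measure α} [IsFiniteMeasure μ] {X : α → β}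
    {Y Z : α → E} (hX : Measurable X) (hY : Measurable Y) (hZ : Measurable Z)
    {κY κZ : Kernel β E} [IsFiniteKernel κY] [IsFiniteKernel κZ]
    (hκY : IsCondDistrib κY Y X μ) (hκZ : IsCondDistrib κZ Z X μ) :
    ∫⁻ a, W2sq (κY (X a)) (κZ (X a)) ∂μ ≤ ∫⁻ a, edist (Y a) (Z a) ^ 2 ∂μ := by
  have hYZ : Measurable fun a => (Y a, Z a) := hY.prodMk hZ
  set κ := condDistrib (fun a => (Y a, Z a)) X μ
  have hfst : κ.map Prod.fst =ᵐ[μ.map X] κY :=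
    (condDistrib_comp X hYZ.aemeasurable measurable_fst).symm.trans
      (hκY.condDistrib_ae_eq hX hY)
  have hsnd : κ.map Prod.snd =ᵐ[μ.map X] κZ :=
    (condDistrib_comp X hYZ.aemeasurable measurable_snd).symm.trans
      (hκZ.condDistrib_ae_eq hX hZ)
  have hcoupling : ∀ᵐ a ∂μ, W2sq (κY (X a)) (κZ (X a)) ≤ ∫⁻ p, edist p.1 p.2 ^ 2 ∂(κ (X a)) := by
    filter_upwards [ae_of_ae_map hX.aemeasurable hfst, ae_of_ae_map hX.aemeasurable hsnd]
      with a ha₁ ha₂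
    rw [Kernel.map_apply _ measurable_fst] at ha₁
    rw [Kernel.map_apply _ measurable_snd] at ha₂
    exact W2sq_le_lintegral_of_coupling _ ha₁ ha₂
  calc ∫⁻ a, W2sq (κY (X a)) (κZ (X a)) ∂μ
      ≤ ∫⁻ a, ∫⁻ p, edist p.1 p.2 ^ 2 ∂(κ (X a)) ∂μ := lintegral_mono_ae hcoupling
    _ = ∫⁻ a, edist (Y a) (Z a) ^ 2 ∂μ :=
      lintegral_lintegral_condDistrib hX hYZ (measurable_edist.pow_const 2)

end ProbabilityTheory

lemma MeasureTheory.MemLp.ofReal_integral_norm_sub_sq {α E : Type*} {mα : MeasurableSpace α}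
    {μ : Measure α} [NormedAddCommGroup E] {f g : α → E} (hf : MemLp f 2 μ)
    (hg : MemLp g 2 μ) :
    ENNReal.ofReal (∫ a, ‖f a - g a‖ ^ 2 ∂μ) = ∫⁻ a, edist (f a) (g a) ^ 2 ∂μ := by
  have hint : Integrable (fun a => ‖f a - g a‖ ^ 2) μ :=
    (hf.sub hg).integrable_norm_pow two_ne_zero
  rw [ofReal_integral_eq_lintegral_ofReal hint
    (Filter.Eventually.of_forall fun _ => by positivity)]
  simp_rw [edist_eq_enorm_sub, ENNReal.ofReal_pow (norm_nonneg _), ofReal_norm]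

/-- For square-integrable `ξ, η : Ω → ℝ^d` and a sub-σ-algebra `G ⊆ F`, if `κξ, κη` are
regular conditional distributions of `ξ` resp. `η` given `G`, then
`E[W₂(L_{ξ|G}, L_{η|G})²] ≤ E[E(|ξ - η|² | G)] = E[|ξ - η|²]`. -/
theorem conditional_wasserstein_le_conditional_second_moment
    {d : ℕ} {Ω : Type*} (G : MeasurableSpace Ω) (F : MeasurableSpace Ω) (hG : G ≤ F)
    (P : Measure Ω) [IsProbabilityMeasure P]
    (ξ η : Ω → EuclideanSpace ℝ (Fin d))
    (hξm : Measurable ξ) (hηm : Measurable η)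
    (hξ : MemLp ξ 2 P) (hη : MemLp η 2 P)
    (κξ κη : @Kernel Ω (EuclideanSpace ℝ (Fin d)) G _)
    [IsMarkovKernel κξ] [IsMarkovKernel κη]
    (hκξ : ∀ A : Set (EuclideanSpace ℝ (Fin d)), MeasurableSet A →
      ∀ B : Set Ω, MeasurableSet[G] B → ∫⁻ ω in B, κξ ω A ∂P = P (B ∩ ξ ⁻¹' A))
    (hκη : ∀ A : Set (EuclideanSpace ℝ (Fin d)), MeasurableSet A →
      ∀ B : Set Ω, MeasurableSet[G] B → ∫⁻ ω in B, κη ω A ∂P = P (B ∩ η ⁻¹' A)) :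
    (∫⁻ ω, W2sq (κξ ω) (κη ω) ∂P
        ≤ ENNReal.ofReal (∫ ω, (P[fun ω' => ‖ξ ω' - η ω'‖ ^ 2 | G]) ω ∂P)) ∧
    ∫ ω, (P[fun ω' => ‖ξ ω' - η ω'‖ ^ 2 | G]) ω ∂P = ∫ ω, ‖ξ ω - η ω‖ ^ 2 ∂P := by
  have hX : Measurable[F, G] id := measurable_id'' hG
  refine ⟨?_, integral_condExp hG⟩
  rw [integral_condExp hG, hξ.ofReal_integral_norm_sub_sq hη]
  exact lintegral_W2sq_le_of_isCondDistrib hX hξm hηm hκξ hκη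
end

section
/- For any probability measures μ and ν on a measurable space E, Ent(ν|μ) = sup { ∫ log f dν − log ∫ f dμ : f : E → ℝ bounded measurable with inf f > 0 }, where both sides may equal +∞ simultaneously (in particular both sides are +∞ when ν is not absolutely continuous with respect to μ). -/
open MeasureTheory ENNReal Classical

/-- Relative entropy `Ent(ν|μ) = ∫ log (dν/dμ) dν` if `ν ≪ μ` (and the integral exists),
and `Ent(ν|μ) = ∞` otherwise. -/

noncomputable def Ent {E : Type*} [MeasurableSpace E] (ν μ : Measure E) : ℝ≥0∞ :=
  if ν ≪ μ ∧ Integrable (fun x => Real.log (ν.rnDeriv μ x).toReal) ν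
  then ENNReal.ofReal (∫ x, Real.log (ν.rnDeriv μ x).toReal ∂ν)
  else ⊤

/-!
Write `r = dν/dμ`. For the upper bound, tilting `μ` by `log f` gives a probability measure `μ_f`
with `∫ log (dν/dμ_f) dν = Ent(ν|μ) - ∫ log f dν + log ∫ f dμ`, which is nonnegative by Gibbs'
inequality. For the lower bound, `log ∫ f dμ ≤ ∫ f dμ - 1` gives
`∫ log f dν - log ∫ f dμ ≥ ∫ (r log f - f + 1) dμ`. For `f` the truncation of `r` to
`[1/(n+1), n+1]` this integrand is nonnegative and tends to `r log r - r + 1`, whose `μ`-integral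
is `Ent(ν|μ)` also when the entropy is infinite, so Fatou's lemma concludes. If `ν` is not
absolutely continuous, a large value of `f` on a `μ`-null set charged by `ν` makes the functional
unbounded.
-/

open InformationTheory Real Filter Topology Set

noncomputable def clampNat (n : ℕ) (r : ℝ) : ℝ := min (max r (n + 1 : ℝ)⁻¹) (n + 1)

section clampNat

variable {n : ℕ} {r : ℝ}

lemma inv_le_clampNat : (n + 1 : ℝ)⁻¹ ≤ clampNat n r :=
  le_min (le_max_right _ _) ((inv_le_one_of_one_le₀ (by simp)).trans (by simp))

lemma clampNat_le : clampNat n r ≤ n + 1 := min_le_right _ _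

lemma clampNat_pos : 0 < clampNat n r :=
  (by positivity : (0 : ℝ) < (n + 1 : ℝ)⁻¹).trans_le inv_le_clampNat

lemma continuous_clampNat (n : ℕ) : Continuous (clampNat n) := by
  unfold clampNat
  fun_prop

lemma clampNat_eq_self (h₁ : (n + 1 : ℝ)⁻¹ ≤ r) (h₂ : r ≤ n + 1) : clampNat n r = r := by
  rw [clampNat, max_eq_left h₁, min_eq_left h₂]

lemma clampNat_le_one_of_lt (h : r < clampNat n r) : clampNat n r ≤ 1 := by
  rcases max_choice r (n + 1 : ℝ)⁻¹ with h_max | h_max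
  · exact absurd ((min_le_left _ _).trans h_max.le) h.not_ge
  · exact (min_le_left _ _).trans (h_max.le.trans (inv_le_one_of_one_le₀ (by simp)))

lemma one_le_clampNat_of_lt (h : clampNat n r < r) : 1 ≤ clampNat n r := by
  rcases min_choice (max r (n + 1 : ℝ)⁻¹) (n + 1) with h_min | h_min
  · exact absurd (h_min.ge.trans' (le_max_left _ _)) h.not_ge
  · rw [clampNat, h_min]
    simp

/-- `r log t - t + 1 = klFun t + (r - t) log t`, and clamping moves `t` from `r` towards `1`,
which makes the second term nonnegative. -/
lemma mul_log_clampNat_sub_add_one_nonneg : 0 ≤ r * log (clampNat n r) - clampNat n r + 1 := by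
  set t := clampNat n r
  have h_eq : r * log t - t + 1 = klFun t + (r - t) * log t := by rw [klFun]; ring
  have h_cross : 0 ≤ (r - t) * log t := by
    rcases lt_trichotomy r t with h | h | h
    · exact mul_nonneg_of_nonpos_of_nonpos (sub_nonpos.2 h.le)
        (log_nonpos clampNat_pos.le (clampNat_le_one_of_lt h))
    · simp [h]
    · exact mul_nonneg (sub_nonneg.2 h.le) (log_nonneg (one_le_clampNat_of_lt h))
  rw [h_eq]
  exact add_nonneg (klFun_nonneg clampNat_pos.le) h_cross

lemma tendsto_mul_log_clampNat_sub_add_one (hr : 0 ≤ r) :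
    Tendsto (fun n ↦ r * log (clampNat n r) - clampNat n r + 1) atTop (𝓝 (klFun r)) := by
  rcases hr.eq_or_lt with rfl | hr
  · have h_inv : Tendsto (fun n : ℕ ↦ (n + 1 : ℝ)⁻¹) atTop (𝓝 0) := by
      simpa only [one_div] using tendsto_one_div_add_atTop_nhds_zero_nat (𝕜 := ℝ)
    have h0 : ∀ n : ℕ, clampNat n 0 = (n + 1 : ℝ)⁻¹ := fun n ↦ by
      rw [clampNat, max_eq_right (by positivity),
        min_eq_left ((inv_le_one_of_one_le₀ (by simp)).trans (by simp))]
    simpa [h0, klFun_zero] using (h_inv.neg.add_const 1)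
  · refine tendsto_const_nhds.congr' ?_
    filter_upwards
      [(tendsto_one_div_add_atTop_nhds_zero_nat (𝕜 := ℝ)).eventually (gt_mem_nhds hr),
      tendsto_natCast_atTop_atTop.eventually_ge_atTop r] with n h₁ h₂
    rw [clampNat_eq_self (by simpa using h₁.le) (by linarith), klFun]
    ring

end clampNat

section

variable {E : Type*} [MeasurableSpace E] {μ ν : Measure E}

lemma Ent_eq_klDiv [IsProbabilityMeasure μ] [IsProbabilityMeasure ν] : Ent ν μ = klDiv ν μ := by
  by_cases h : ν ≪ μ ∧ Integrable (fun x ↦ log (ν.rnDeriv μ x).toReal) ν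
  · rw [Ent, if_pos h, klDiv_of_ac_of_integrable h.1 h.2]
    simp [llr]
  · rw [Ent, if_neg h, eq_comm, klDiv_eq_top_iff]
    exact fun hac hint ↦ h ⟨hac, hint⟩

lemma integrable_log_of_mem_Icc [IsFiniteMeasure μ] {f : E → ℝ} {a b : ℝ} (ha : 0 < a)
    (hf : AEMeasurable f μ) (hab : ∀ᵐ x ∂μ, f x ∈ Icc a b) :
    Integrable (fun x ↦ log (f x)) μ :=
  .of_mem_Icc (log a) (log b) hf.log <| hab.mono fun _ hx ↦
    ⟨log_le_log ha hx.1, log_le_log (ha.trans_le hx.1) hx.2⟩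

lemma integral_sub_log_integral_exp_le_integral_llr [IsProbabilityMeasure μ]
    [IsProbabilityMeasure ν] (hνμ : ν ≪ μ) (h_int : Integrable (llr ν μ) ν) {g : E → ℝ}
    (hg : Integrable g ν) (hexp : Integrable (fun x ↦ exp (g x)) μ) :
    ∫ x, g x ∂ν - log (∫ x, exp (g x) ∂μ) ≤ ∫ x, llr ν μ x ∂ν := by
  have := isProbabilityMeasure_tilted hexp
  have h_gibbs := integral_llr_add_sub_measure_univ_nonneg
    (hνμ.trans (absolutelyContinuous_tilted hexp)) (integrable_llr_tilted_right hνμ hg h_int hexp)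
  rw [integral_llr_tilted_right hνμ hg hexp h_int] at h_gibbs
  simp only [probReal_univ] at h_gibbs
  linarith

lemma ofReal_integral_log_sub_log_integral_le_klDiv [IsProbabilityMeasure μ]
    [IsProbabilityMeasure ν] {f : E → ℝ} (hf_pos : ∀ x, 0 < f x) (hfμ : Integrable f μ)
    (hfν : Integrable (fun x ↦ log (f x)) ν) :
    ENNReal.ofReal (∫ x, log (f x) ∂ν - log (∫ x, f x ∂μ)) ≤ klDiv ν μ := by
  by_cases h : ν ≪ μ ∧ Integrable (llr ν μ) ν
  · rw [klDiv_of_ac_of_integrable h.1 h.2]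
    simp only [probReal_univ, add_sub_cancel_right]
    refine ENNReal.ofReal_le_ofReal ?_
    simpa only [exp_log (hf_pos _)] using
      integral_sub_log_integral_exp_le_integral_llr h.1 h.2 hfν (by simpa only [exp_log (hf_pos _)])
  · rw [klDiv_eq_top_iff.2 fun hac hint ↦ h ⟨hac, hint⟩]
    exact le_top

lemma integral_rnDeriv_mul_log_sub_add_one_le [IsProbabilityMeasure μ] [IsFiniteMeasure ν]
    (hνμ : ν ≪ μ) {f : E → ℝ} (hf_pos : ∀ x, 0 < f x) (hfμ : Integrable f μ)
    (hfν : Integrable (fun x ↦ log (f x)) ν) :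
    ∫ x, ((ν.rnDeriv μ x).toReal * log (f x) - f x + 1) ∂μ
      ≤ ∫ x, log (f x) ∂ν - log (∫ x, f x ∂μ) := by
  have h_mul : Integrable (fun x ↦ (ν.rnDeriv μ x).toReal * log (f x)) μ :=
    (integrable_rnDeriv_smul_iff hνμ).2 hfν
  have h_change : ∫ x, (ν.rnDeriv μ x).toReal * log (f x) ∂μ = ∫ x, log (f x) ∂ν :=
    integral_rnDeriv_smul hνμ
  have h_pos : 0 < ∫ x, f x ∂μ :=
    (integral_pos_iff_support_of_nonneg (fun x ↦ (hf_pos x).le) hfμ).2 <| by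
      simp [Function.support, (hf_pos _).ne']
  have h_sub : Integrable (fun x ↦ (ν.rnDeriv μ x).toReal * log (f x) - f x) μ := h_mul.sub hfμ
  rw [integral_add h_sub (integrable_const 1), integral_sub h_mul hfμ, h_change]
  have := log_le_sub_one_of_pos h_pos
  simp only [integral_const, probReal_univ, smul_eq_mul, mul_one]
  linarith

lemma klDiv_le_liminf_ofReal_integral_log_clampNat_sub [IsProbabilityMeasure μ]
    [IsProbabilityMeasure ν] (hνμ : ν ≪ μ) :
    klDiv ν μ ≤ liminf (fun n ↦ ENNReal.ofReal (∫ x, log (clampNat n (ν.rnDeriv μ x).toReal) ∂ν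
      - log (∫ x, clampNat n (ν.rnDeriv μ x).toReal ∂μ))) atTop := by
  set r : E → ℝ := fun x ↦ (ν.rnDeriv μ x).toReal
  have hr : Measurable r := (Measure.measurable_rnDeriv ν μ).ennreal_toReal
  set f : ℕ → E → ℝ := fun n x ↦ clampNat n (r x)
  have hf n : Measurable (f n) := (continuous_clampNat n).measurable.comp hr
  set h : ℕ → E → ℝ := fun n x ↦ r x * log (f n x) - f n x + 1
  have h_le n : ∫⁻ x, ENNReal.ofReal (h n x) ∂μ
      ≤ ENNReal.ofReal (∫ x, log (f n x) ∂ν - log (∫ x, f n x ∂μ)) := by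
    have hfμ : Integrable (f n) μ :=
      .of_mem_Icc _ _ (hf n).aemeasurable (ae_of_all _ fun _ ↦ ⟨inv_le_clampNat, clampNat_le⟩)
    have hfν : Integrable (fun x ↦ log (f n x)) ν := integrable_log_of_mem_Icc (by positivity)
      (hf n).aemeasurable (ae_of_all _ fun _ ↦ ⟨inv_le_clampNat, clampNat_le⟩)
    have hh : Integrable (h n) μ :=
      (((integrable_rnDeriv_smul_iff hνμ).2 hfν).sub hfμ).add (integrable_const 1)
    rw [← ofReal_integral_eq_lintegral_ofReal hh
      (ae_of_all _ fun _ ↦ mul_log_clampNat_sub_add_one_nonneg)]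
    exact ENNReal.ofReal_le_ofReal
      (integral_rnDeriv_mul_log_sub_add_one_le hνμ (fun _ ↦ clampNat_pos) hfμ hfν)
  calc klDiv ν μ = ∫⁻ x, ENNReal.ofReal (klFun (r x)) ∂μ := klDiv_eq_lintegral_klFun_of_ac hνμ
  _ = ∫⁻ x, liminf (fun n ↦ ENNReal.ofReal (h n x)) atTop ∂μ := by
      refine lintegral_congr fun x ↦ ?_
      exact ((ENNReal.tendsto_ofReal
        (tendsto_mul_log_clampNat_sub_add_one ENNReal.toReal_nonneg)).liminf_eq).symm
  _ ≤ liminf (fun n ↦ ∫⁻ x, ENNReal.ofReal (h n x) ∂μ) atTop :=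
      lintegral_liminf_le fun n ↦ ((hr.mul (hf n).log).sub (hf n)).add_const 1 |>.ennreal_ofReal
  _ ≤ _ := liminf_le_liminf (.of_forall h_le)

lemma exists_lt_integral_log_sub_log_integral_of_not_ac [IsProbabilityMeasure μ]
    [IsFiniteMeasure ν] (h : ¬ ν ≪ μ) (M : ℝ) :
    ∃ f : E → ℝ, Measurable f ∧ (∃ C, ∀ x, f x ≤ C) ∧ (∃ ε > (0 : ℝ), ∀ x, ε ≤ f x) ∧
      M < ∫ x, log (f x) ∂ν - log (∫ x, f x ∂μ) := by
  obtain ⟨t, ht, hμt, hνt⟩ : ∃ t, MeasurableSet t ∧ μ t = 0 ∧ ν t ≠ 0 := by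
    contrapose! h
    exact .mk fun t ht hμt ↦ h t ht hμt
  have hνt_pos : 0 < ν.real t := ENNReal.toReal_pos hνt (measure_ne_top ν t)
  set b := (|M| + 1) / ν.real t
  have hb : 0 ≤ b := by positivity
  refine ⟨t.piecewise (fun _ ↦ exp b) 1, measurable_const.piecewise ht measurable_const,
    ⟨exp b, fun x ↦ ?_⟩, ⟨1, one_pos, fun x ↦ ?_⟩, ?_⟩
  · by_cases hx : x ∈ t <;> simp [hx, one_le_exp hb]
  · by_cases hx : x ∈ t <;> simp [hx, one_le_exp hb]
  have h_log : (fun x ↦ log (t.piecewise (fun _ ↦ exp b) 1 x)) = t.indicator fun _ ↦ b := by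
    ext x
    by_cases hx : x ∈ t <;> simp [hx]
  have h_one : t.piecewise (fun _ ↦ exp b) 1 =ᵐ[μ] 1 := by
    filter_upwards [measure_eq_zero_iff_ae_notMem.1 hμt] with x hx
    simp [hx]
  rw [h_log, integral_indicator_const b ht, integral_congr_ae h_one]
  simp [b, mul_div_cancel₀ _ hνt_pos.ne']
  linarith [le_abs_self M]

lemma exists_lt_ofReal_integral_log_sub_log_integral [IsProbabilityMeasure μ]
    [IsProbabilityMeasure ν] {a : ℝ≥0∞} (ha : a < klDiv ν μ) :
    ∃ f : E → ℝ, Measurable f ∧ (∃ C, ∀ x, f x ≤ C) ∧ (∃ ε > (0 : ℝ), ∀ x, ε ≤ f x) ∧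
      a < ENNReal.ofReal (∫ x, log (f x) ∂ν - log (∫ x, f x ∂μ)) := by
  by_cases hνμ : ν ≪ μ
  · obtain ⟨n, hn⟩ := (eventually_lt_of_lt_liminf
      (ha.trans_le (klDiv_le_liminf_ofReal_integral_log_clampNat_sub hνμ))).exists
    exact ⟨fun x ↦ clampNat n (ν.rnDeriv μ x).toReal,
      (continuous_clampNat n).measurable.comp (Measure.measurable_rnDeriv ν μ).ennreal_toReal,
      ⟨n + 1, fun x ↦ clampNat_le⟩, ⟨_, by positivity, fun x ↦ inv_le_clampNat⟩, hn⟩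
  · obtain ⟨f, hf, hC, hε, hM⟩ := exists_lt_integral_log_sub_log_integral_of_not_ac hνμ a.toReal
    exact ⟨f, hf, hC, hε, (ENNReal.lt_ofReal_iff_toReal_lt ha.ne_top).2 hM⟩

end

/-- Variational (Donsker–Varadhan) formula:
`Ent(ν|μ) = sup { ∫ log f dν − log ∫ f dμ : f bounded measurable, inf f > 0 }`,
where both sides may simultaneously be `+∞`. -/
theorem ent_eq_iSup_integral_log
    {E : Type*} [MeasurableSpace E] (ν μ : Measure E)
    [IsProbabilityMeasure μ] [IsProbabilityMeasure ν] :
    Ent ν μ =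
      ⨆ (f : E → ℝ) (_ : Measurable f) (_ : ∃ C : ℝ, ∀ x, f x ≤ C)
        (_ : ∃ ε > (0 : ℝ), ∀ x, ε ≤ f x),
        ENNReal.ofReal (∫ x, Real.log (f x) ∂ν - Real.log (∫ x, f x ∂μ)) := by
  rw [Ent_eq_klDiv]
  refine le_antisymm (le_of_forall_lt fun a ha ↦ ?_)
    (iSup₂_le fun f hf ↦ iSup₂_le fun ⟨C, hC⟩ ⟨ε, hε, hεf⟩ ↦ ?_)
  · obtain ⟨f, hf, hC, hε, hlt⟩ := exists_lt_ofReal_integral_log_sub_log_integral ha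
    exact hlt.trans_le (le_iSup₂_of_le f hf (le_iSup₂_of_le hC hε le_rfl))
  · exact ofReal_integral_log_sub_log_integral_le_klDiv (fun x ↦ hε.trans_le (hεf x))
      (.of_mem_Icc ε C hf.aemeasurable (ae_of_all _ fun x ↦ ⟨hεf x, hC x⟩))
      (integrable_log_of_mem_Icc hε hf.aemeasurable (ae_of_all _ fun x ↦ ⟨hεf x, hC x⟩))
end

section
/- Let (Ω, G, P) be a probability space and let κ, η be Markov kernels from (Ω, G) to a standard Borel space E such that ω ↦ Ent(κ(ω)|η(ω)) is measurable (as a function with values in [0, ∞]). Let P∘κ and P∘η denote the mixture probability measures on E defined by (P∘κ)(A) = ∫ κ(ω)(A) P(dω) and (P∘η)(A) = ∫ η(ω)(A) P(dω). Then Ent(P∘κ | P∘η) ≤ ∫ Ent(κ(ω)|η(ω)) P(dω). -/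
/-!
The mixture `P∘κ` is the second marginal of the joint law `P ⊗ₘ κ`, so by the data processing
inequality its divergence from `P∘η` is at most that of `P ⊗ₘ κ` from `P ⊗ₘ η`. On a countably
generated space the density of `P ⊗ₘ κ` with respect to `P ⊗ₘ η` is the jointly measurable kernel
density `(ω, x) ↦ ∂κ(ω)/∂η(ω) (x)`, and writing the divergence as the integral of
`klFun t = t log t + 1 - t` against `P ⊗ₘ η`, Tonelli turns it into `∫ Ent(κ(ω)|η(ω)) P(dω)`.
-/

open MeasureTheory ProbabilityTheory ENNReal Classical

open InformationTheory

lemma ent_eq_klDiv {E : Type*} [MeasurableSpace E] (ν μ : Measure E) [IsProbabilityMeasure ν]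
    [IsProbabilityMeasure μ] : Ent ν μ = klDiv ν μ := by
  simp only [Ent, klDiv_def, probReal_univ, add_sub_cancel_right]
  rfl

namespace ProbabilityTheory

variable {α β : Type*} {mα : MeasurableSpace α} {mβ : MeasurableSpace β}
  [MeasurableSpace.CountableOrCountablyGenerated α β]
  {μ : Measure α} {κ η : Kernel α β} [IsFiniteMeasure μ] [IsFiniteKernel κ] [IsFiniteKernel η]

lemma rnDeriv_measure_compProd_right :
    (μ ⊗ₘ κ).rnDeriv (μ ⊗ₘ η) =ᵐ[μ ⊗ₘ η] fun p ↦ κ.rnDeriv η p.1 p.2 := by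
  conv_lhs => rw [← κ.rnDeriv_add_singularPart η, Measure.compProd_add_right]
  have h_sing : (μ ⊗ₘ κ.singularPart η).rnDeriv (μ ⊗ₘ η) =ᵐ[μ ⊗ₘ η] 0 :=
    Measure.rnDeriv_eq_zero_of_mutuallySingular
      (Measure.MutuallySingular.compProd_of_right _ _
        (.of_forall (Kernel.mutuallySingular_singularPart _ _))) .rfl
  have h_dens := Measure.rnDeriv_withDensity (μ ⊗ₘ η) (κ.measurable_rnDeriv η)
  rw [← Measure.compProd_withDensity (κ.measurable_rnDeriv η)] at h_dens
  filter_upwards [Measure.rnDeriv_add' (μ ⊗ₘ η.withDensity (κ.rnDeriv η))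
    (μ ⊗ₘ κ.singularPart η) (μ ⊗ₘ η), h_sing, h_dens] with p h_add h_zero h_eq
  simp [h_add, h_zero, h_eq]

lemma klDiv_compProd_right_of_ae_absolutelyContinuous (h_ac : ∀ᵐ a ∂μ, κ a ≪ η a) :
    klDiv (μ ⊗ₘ κ) (μ ⊗ₘ η) = ∫⁻ a, klDiv (κ a) (η a) ∂μ := by
  rw [klDiv_eq_lintegral_klFun_of_ac (Measure.absolutelyContinuous_compProd_right_iff.mpr h_ac),
    lintegral_congr_ae (rnDeriv_measure_compProd_right.mono fun p hp ↦ by rw [hp]),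
    Measure.lintegral_compProd (by fun_prop)]
  refine lintegral_congr_ae ?_
  filter_upwards [h_ac] with a ha
  rw [klDiv_eq_lintegral_klFun_of_ac ha]
  refine lintegral_congr_ae ?_
  filter_upwards [κ.rnDeriv_eq_rnDeriv_measure (η := η) (a := a)] with x hx
  rw [hx]

lemma klDiv_compProd_right (h_meas : Measurable fun a ↦ klDiv (κ a) (η a)) :
    klDiv (μ ⊗ₘ κ) (μ ⊗ₘ η) = ∫⁻ a, klDiv (κ a) (η a) ∂μ := by
  by_cases h_ac : ∀ᵐ a ∂μ, κ a ≪ η a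
  · exact klDiv_compProd_right_of_ae_absolutelyContinuous h_ac
  rw [klDiv_of_not_ac (mt Measure.absolutelyContinuous_compProd_right_iff.mp h_ac), eq_comm]
  by_contra h_fin
  refine h_ac ((ae_lt_top h_meas h_fin).mono fun a ha ↦ ?_)
  exact (klDiv_ne_top_iff.mp ha.ne).1

lemma klDiv_comp_le_lintegral_klDiv (h_meas : Measurable fun a ↦ klDiv (κ a) (η a)) :
    klDiv (κ ∘ₘ μ) (η ∘ₘ μ) ≤ ∫⁻ a, klDiv (κ a) (η a) ∂μ := by
  rw [← klDiv_compProd_right h_meas, ← Measure.snd_compProd μ κ, ← Measure.snd_compProd μ η]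
  exact klDiv_map_le _ _ measurable_snd

end ProbabilityTheory

/-- For Markov kernels `κ, η` from `(Ω, G)` to a standard Borel space `E` such that
`ω ↦ Ent(κ(ω)|η(ω))` is measurable, the relative entropy of the mixtures satisfies
`Ent(P∘κ | P∘η) ≤ ∫ Ent(κ(ω)|η(ω)) P(dω)`. -/
theorem ent_mixture_le_lintegral_ent
    {Ω E : Type*} [MeasurableSpace Ω] [MeasurableSpace E] [StandardBorelSpace E]
    (P : Measure Ω) [IsProbabilityMeasure P]
    (κ η : Kernel Ω E) [IsMarkovKernel κ] [IsMarkovKernel η]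
    (hmeas : Measurable fun ω => Ent (κ ω) (η ω)) :
    Ent (P.bind fun ω => κ ω) (P.bind fun ω => η ω) ≤ ∫⁻ ω, Ent (κ ω) (η ω) ∂P := by
  simp only [ent_eq_klDiv] at hmeas ⊢
  exact klDiv_comp_le_lintegral_klDiv hmeas
end

section
/- Let N ≥ 1, 1 ≤ k ≤ N, and let μ, ν be exchangeable probability measures on (ℝ^d)^N with finite second moments. Let π_k : (ℝ^d)^N → (ℝ^d)^k denote the projection onto the first k coordinates. Then W₂((π_k)_*μ, (π_k)_*ν)² ≤ (k/N) W₂(μ, ν)². -/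
/-!
Given a coupling `π` of `μ` and `ν`, rotate the coordinates of both components by `j ∈ ℤ/N` and
keep the first `k`. By exchangeability each of these `N` pushforwards is a coupling of the
`k`-marginals, and summed over `j` their costs count every coordinate exactly `k` times, so their
average cost is `k/N` times the cost of `π`.
-/

open MeasureTheory ENNReal

/-- Product σ-algebra on the `L²`-product space. -/
instance {ι : Type*} {E : ι → Type*} [∀ i, MeasurableSpace (E i)] :
    MeasurableSpace (PiLp 2 E) := MeasurableSpace.comap (fun x : PiLp 2 E => WithLp.ofLp x) MeasurableSpace.pi

section Coupling

variable {E F : Type*} [MeasurableSpace E] [MeasurableSpace F]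

def IsCoupling (π : Measure (E × E)) (μ ν : Measure E) : Prop :=
  IsProbabilityMeasure π ∧ π.map Prod.fst = μ ∧ π.map Prod.snd = ν

theorem IsCoupling.map_prodMap {π : Measure (E × E)} {μ ν : Measure E} (h : IsCoupling π μ ν)
    {f : E → F} (hf : Measurable f) :
    IsCoupling (π.map (Prod.map f f)) (μ.map f) (ν.map f) := by
  obtain ⟨hπ, hμ, hν⟩ := h
  have hff : Measurable (Prod.map f f) := hf.prodMap hf
  refine ⟨Measure.isProbabilityMeasure_map hff.aemeasurable, ?_, ?_⟩
  · rw [Measure.map_map measurable_fst hff, ← hμ, Measure.map_map hf measurable_fst]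
    rfl
  · rw [Measure.map_map measurable_snd hff, ← hν, Measure.map_map hf measurable_snd]
    rfl

variable [PseudoEMetricSpace F]

theorem W2sq_le_lintegral {π : Measure (F × F)} {μ ν : Measure F} (h : IsCoupling π μ ν) :
    W2sq μ ν ≤ ∫⁻ p, edist p.1 p.2 ^ 2 ∂π :=
  iInf₂_le π h

theorem W2sq_map_le_lintegral {π : Measure (E × E)} {μ ν : Measure E} (h : IsCoupling π μ ν)
    {f : E → F} (hf : Measurable f) :
    W2sq (μ.map f) (ν.map f) ≤ ∫⁻ p, edist (f p.1) (f p.2) ^ 2 ∂π :=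
  (W2sq_le_lintegral (h.map_prodMap hf)).trans
    (lintegral_map_le (fun q : F × F => edist q.1 q.2 ^ 2) _)

theorem le_mul_W2sq_of_forall_isCoupling {μ ν : Measure F} {a c : ℝ≥0∞} (hc₀ : c ≠ 0)
    (hc : c ≠ ∞) (h : ∀ π, IsCoupling π μ ν → a ≤ c * ∫⁻ p, edist p.1 p.2 ^ 2 ∂π) :
    a ≤ c * W2sq μ ν := by
  simp only [W2sq, ENNReal.mul_iInf_of_ne hc₀ hc]
  exact le_iInf₂ h

end Coupling

theorem le_lintegral_finsetSum {α ι : Type*} [MeasurableSpace α] {μ : Measure α}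
    (s : Finset ι) (f : ι → α → ℝ≥0∞) :
    ∑ i ∈ s, ∫⁻ a, f i a ∂μ ≤ ∫⁻ a, ∑ i ∈ s, f i a ∂μ := by
  classical
  induction s using Finset.induction_on with
  | empty => simp
  | insert i s hi ih =>
    simp only [Finset.sum_insert hi]
    exact (add_le_add le_rfl ih).trans (le_lintegral_add _ _)

theorem Fintype.sum_sum_add_eq_card_nsmul {G ι M : Type*} [AddGroup G] [Fintype G] [Fintype ι]
    [AddCommMonoid M] (f : G → M) (s : ι → G) :
    ∑ j, ∑ i, f (j + s i) = Fintype.card ι • ∑ g, f g := by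
  rw [Finset.sum_comm]
  have hrow : ∀ i, ∑ j, f (j + s i) = ∑ g, f g := fun i =>
    Equiv.sum_comp (Equiv.addRight (s i)) f
  simp only [hrow, Finset.sum_const, Finset.card_univ]

namespace PiLp

variable {p : ℝ≥0∞} {ι ι' E : Type*}

def reindex (p : ℝ≥0∞) (f : ι' → ι) (v : PiLp p fun _ : ι => E) : PiLp p fun _ : ι' => E :=
  WithLp.toLp p fun i => v (f i)

@[simp]
theorem reindex_apply (f : ι' → ι) (v : PiLp p fun _ : ι => E) (i : ι') :
    reindex p f v i = v (f i) :=
  rfl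

theorem reindex_comp {ι'' : Type*} (f : ι' → ι) (g : ι'' → ι') :
    reindex p g ∘ reindex (E := E) p f = reindex p (f ∘ g) :=
  rfl

theorem measurable_reindex [MeasurableSpace E] (f : ι' → ι) :
    Measurable (reindex (E := E) p f) :=
  (WithLp.measurable_toLp _ _).comp
    (measurable_pi_lambda _ fun i => (measurable_pi_apply (f i)).comp (WithLp.measurable_ofLp _ _))

theorem map_reindex_perm_comp [MeasurableSpace E] {μ : Measure (PiLp p fun _ : ι => E)}
    (hμ : ∀ σ : Equiv.Perm ι, μ.map (reindex p σ) = μ) (σ : Equiv.Perm ι) (f : ι' → ι) :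
    μ.map (reindex p (σ ∘ f)) = μ.map (reindex p f) := by
  rw [← reindex_comp, ← Measure.map_map (measurable_reindex f) (measurable_reindex σ), hμ]

theorem edist_sq_eq_of_L2 [Fintype ι] {β : ι → Type*} [∀ i, SeminormedAddCommGroup (β i)]
    (x y : PiLp 2 β) : edist x y ^ 2 = ∑ i, edist (x i) (y i) ^ 2 := by
  rw [edist_eq_of_L2, ← ENNReal.rpow_natCast, ← ENNReal.rpow_mul]
  norm_num

theorem sum_edist_sq_reindex_add [AddGroup ι] [Fintype ι] [Fintype ι'] [SeminormedAddCommGroup E]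
    (s : ι' → ι) (x y : PiLp 2 fun _ : ι => E) :
    ∑ j, edist (reindex 2 (fun i => j + s i) x) (reindex 2 (fun i => j + s i) y) ^ 2 =
      Fintype.card ι' * edist x y ^ 2 := by
  simp only [edist_sq_eq_of_L2, reindex_apply]
  rw [Fintype.sum_sum_add_eq_card_nsmul (fun g => edist (x g) (y g) ^ 2), nsmul_eq_mul]

end PiLp

theorem w2sq_marginal_le_of_exchangeable_general {d N k : ℕ} (hk : 1 ≤ k) (hkN : k ≤ N)
    (μ ν : Measure (PiLp 2 fun _ : Fin N => EuclideanSpace ℝ (Fin d)))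
    (hμexch : ∀ σ : Equiv.Perm (Fin N),
      μ.map (fun v => (WithLp.toLp 2 (fun i => v (σ i)) : PiLp 2 fun _ : Fin N => EuclideanSpace ℝ (Fin d))) = μ)
    (hνexch : ∀ σ : Equiv.Perm (Fin N),
      ν.map (fun v => (WithLp.toLp 2 (fun i => v (σ i)) : PiLp 2 fun _ : Fin N => EuclideanSpace ℝ (Fin d))) = ν)
    (πk : PiLp 2 (fun _ : Fin N => EuclideanSpace ℝ (Fin d)) →
      PiLp 2 fun _ : Fin k => EuclideanSpace ℝ (Fin d))
    (hπk : ∀ v i, πk v i = v (Fin.castLE hkN i)) :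
    W2sq (μ.map πk) (ν.map πk) ≤ (k : ℝ≥0∞) / N * W2sq μ ν := by
  have : NeZero N := ⟨by omega⟩
  obtain rfl : πk = PiLp.reindex 2 (Fin.castLE hkN) := funext fun v => PiLp.ext (hπk v)
  set shift : Fin N → Fin k → Fin N := fun j i => j + Fin.castLE hkN i
  refine le_mul_W2sq_of_forall_isCoupling (by simp; omega)
    (ENNReal.div_ne_top (by simp) (by simp; omega)) fun π hπ => ?_
  have hshift (j : Fin N) :
      W2sq (μ.map (PiLp.reindex 2 (Fin.castLE hkN))) (ν.map (PiLp.reindex 2 (Fin.castLE hkN))) ≤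
        ∫⁻ p, edist (PiLp.reindex 2 (shift j) p.1) (PiLp.reindex 2 (shift j) p.2) ^ 2 ∂π := by
    rw [← PiLp.map_reindex_perm_comp hμexch (Equiv.addLeft j),
      ← PiLp.map_reindex_perm_comp hνexch (Equiv.addLeft j)]
    exact W2sq_map_le_lintegral hπ (PiLp.measurable_reindex _)
  rw [← ENNReal.mul_div_right_comm, ENNReal.le_div_iff_mul_le (.inl (by simp; omega))
    (.inl (natCast_ne_top N)), mul_comm]
  calc
    _ ≤ ∑ j, ∫⁻ p, edist (PiLp.reindex 2 (shift j) p.1) (PiLp.reindex 2 (shift j) p.2) ^ 2 ∂π := by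
      simpa using Finset.card_nsmul_le_sum Finset.univ _ _ fun j _ => hshift j
    _ ≤ ∫⁻ p, ∑ j, edist (PiLp.reindex 2 (shift j) p.1) (PiLp.reindex 2 (shift j) p.2) ^ 2 ∂π :=
      le_lintegral_finsetSum _ _
    _ = k * ∫⁻ p, edist p.1 p.2 ^ 2 ∂π := by
      simp only [shift, PiLp.sum_edist_sq_reindex_add, Fintype.card_fin]
      exact lintegral_const_mul' _ _ (by simp)

/-- For `1 ≤ k ≤ N` and exchangeable probability measures `μ, ν` on `(ℝ^d)^N` (with the
`L²`-product metric) with finite second moments, the projections onto the first `k`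
coordinates satisfy `W₂((π_k)_*μ, (π_k)_*ν)² ≤ (k/N)·W₂(μ,ν)²`. -/
theorem w2sq_marginal_le_of_exchangeable {d N k : ℕ} (hk : 1 ≤ k) (hkN : k ≤ N)
    (μ ν : Measure (PiLp 2 fun _ : Fin N => EuclideanSpace ℝ (Fin d)))
    [IsProbabilityMeasure μ] [IsProbabilityMeasure ν]
    (hμ2 : ∫⁻ v, edist v 0 ^ 2 ∂μ < ⊤) (hν2 : ∫⁻ v, edist v 0 ^ 2 ∂ν < ⊤)
    (hμexch : ∀ σ : Equiv.Perm (Fin N),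
      μ.map (fun v => (WithLp.toLp 2 (fun i => v (σ i)) : PiLp 2 fun _ : Fin N => EuclideanSpace ℝ (Fin d))) = μ)
    (hνexch : ∀ σ : Equiv.Perm (Fin N),
      ν.map (fun v => (WithLp.toLp 2 (fun i => v (σ i)) : PiLp 2 fun _ : Fin N => EuclideanSpace ℝ (Fin d))) = ν)
    (πk : PiLp 2 (fun _ : Fin N => EuclideanSpace ℝ (Fin d)) →
      PiLp 2 fun _ : Fin k => EuclideanSpace ℝ (Fin d))
    (hπk : ∀ v i, πk v i = v (Fin.castLE hkN i)) :
    W2sq (μ.map πk) (ν.map πk) ≤ (k : ℝ≥0∞) / N * W2sq μ ν :=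
  w2sq_marginal_le_of_exchangeable_general hk hkN μ ν hμexch hνexch πk hπk
end

section
/- Let E be a measurable space, N ≥ 1, 1 ≤ k ≤ N, ν an exchangeable probability measure on E^N, μ a probability measure on E, and C ≥ 0. Suppose that for every bounded measurable F : E^N → ℝ with inf F > 0 one has ∫ log F dν ≤ log ∫ F dμ^{⊗N} + C. Then for every bounded measurable f : E^k → ℝ with inf f > 0, ∫ log f d((π_k)_*ν) ≤ log ∫ f dμ^{⊗k} + C/⌊N/k⌋, where π_k : E^N → E^k is the projection onto the first k coordinates and ⌊N/k⌋ is the integer part of N/k; in particular the last error term is at most (2k/N)·C. -/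
/-!
Cut the first `m * k` coordinates, `m = ⌊N/k⌋`, into `m` disjoint blocks of length `k` and apply
the hypothesis to `F v = ∏ⱼ f (v restricted to block j)`. By exchangeability every block has the
law of the first `k` coordinates, so `∫ log F dν = m ∫ log f d((π_k)_*ν)`, while under `μ^{⊗N}`
the blocks are independent copies of `μ^{⊗k}`, so `∫ F dμ^{⊗N} = (∫ f dμ^{⊗k})^m`. Dividing by `m`
gives the estimate, and `N < (m + 1) k ≤ 2 m k` bounds `C / m`.
-/

open MeasureTheory

namespace MeasureTheory.Measure

variable {ι ι' κ E : Type*} [MeasurableSpace E] (μ : Measure E) [IsProbabilityMeasure μ]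

theorem infinitePi_map_comp_of_injective {g : ι' → ι} (hg : Function.Injective g) :
    (infinitePi fun _ : ι => μ).map (fun x => x ∘ g) = infinitePi fun _ : ι' => μ := by
  let e := MeasurableEquiv.piCongrLeft (fun _ : Set.range g => E) (Equiv.ofInjective g hg)
  have hcomp : (fun x : ι → E => x ∘ g) = e.symm ∘ (Set.range g).domRestrict := by
    ext x i
    simp [e, MeasurableEquiv.piCongrLeft, Equiv.piCongrLeft]
  rw [hcomp, ← map_map e.symm.measurable (by fun_prop), infinitePi_map_restrict',
    MeasurableEquiv.map_apply_eq_iff_map_symm_apply_eq, MeasurableEquiv.symm_symm]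
  exact (infinitePi_map_piCongrLeft (fun _ => μ) (Equiv.ofInjective g hg)).symm

theorem pi_map_blocks [Fintype ι] [Fintype ι'] [Fintype κ] {b : κ × ι' → ι}
    (hb : Function.Injective b) :
    (Measure.pi fun _ : ι => μ).map (fun x j i => x (b (j, i)))
      = Measure.pi fun _ : κ => Measure.pi fun _ : ι' => μ := by
  have hcomp : (fun (x : ι → E) (j : κ) (i : ι') => x (b (j, i)))
      = MeasurableEquiv.curry κ ι' E ∘ fun x => x ∘ b := rfl
  simp_rw [← infinitePi_eq_pi]
  rw [hcomp, ← map_map (by fun_prop) (by fun_prop), infinitePi_map_comp_of_injective μ hb]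
  exact infinitePi_map_curry fun _ _ => μ

theorem integral_prod_blocks_pi [Fintype ι] [Fintype ι'] [Fintype κ] {b : κ × ι' → ι}
    (hb : Function.Injective b) {f : (ι' → E) → ℝ} (hf : Measurable f) :
    ∫ x, ∏ j, f (fun i => x (b (j, i))) ∂(Measure.pi fun _ : ι => μ)
      = (∫ y, f y ∂(Measure.pi fun _ : ι' => μ)) ^ Fintype.card κ := by
  rw [← integral_fintype_prod_eq_pow, ← pi_map_blocks μ hb,
    integral_map (Measurable.aemeasurable (by fun_prop))
      (Measurable.aestronglyMeasurable (by fun_prop))]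

end MeasureTheory.Measure

section Exchangeable

variable {ι ι' κ E : Type*} [MeasurableSpace E]

def IsExchangeable (ν : Measure (ι → E)) : Prop :=
  ∀ σ : Equiv.Perm ι, ν.map (fun v i => v (σ i)) = ν

variable {ν : Measure (ι → E)}

theorem IsExchangeable.map_comp_eq [Finite ι'] (hν : IsExchangeable ν) {g₁ g₂ : ι' → ι}
    (h₁ : Function.Injective g₁) (h₂ : Function.Injective g₂) :
    ν.map (fun v i => v (g₁ i)) = ν.map (fun v i => v (g₂ i)) := by
  obtain ⟨σ, hσ⟩ := Equiv.Perm.exists_extending_pair g₁ g₂ h₁ h₂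
  conv_lhs => rw [← hν σ]
  rw [Measure.map_map (by fun_prop) (by fun_prop)]
  simp only [Function.comp_def, hσ]

theorem IsExchangeable.integral_sum_blocks [Finite ι'] [Fintype κ] (hν : IsExchangeable ν)
    {b : κ → ι' → ι} (hb : ∀ j, Function.Injective (b j)) {g : ι' → ι}
    (hg : Function.Injective g) {φ : (ι' → E) → ℝ}
    (hφ : Integrable φ (ν.map fun v i => v (g i))) :
    ∫ v, ∑ j, φ (fun i => v (b j i)) ∂ν
      = Fintype.card κ * ∫ w, φ w ∂(ν.map fun v i => v (g i)) := by
  have hblock (j : κ) : ν.map (fun v i => v (b j i)) = ν.map fun v i => v (g i) :=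
    hν.map_comp_eq (hb j) hg
  have hint (j : κ) : Integrable (fun v => φ (fun i => v (b j i))) ν :=
    (hblock j ▸ hφ).comp_measurable (by fun_prop)
  rw [integral_finsetSum _ fun j _ => hint j]
  have hterm (j : κ) :
      ∫ v, φ (fun i => v (b j i)) ∂ν = ∫ w, φ w ∂(ν.map fun v i => v (g i)) := by
    rw [← hblock j, integral_map (Measurable.aemeasurable (by fun_prop))
      (hblock j ▸ hφ.aestronglyMeasurable)]
  simp [hterm]

end Exchangeable

theorem integrable_log_of_le_of_le {α : Type*} [MeasurableSpace α] {μ : Measure α}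
    [IsFiniteMeasure μ] {f : α → ℝ} (hf : Measurable f) {ε M : ℝ} (hε : 0 < ε)
    (hεf : ∀ x, ε ≤ f x) (hfM : ∀ x, f x ≤ M) : Integrable (fun x => Real.log (f x)) μ :=
  .of_bound hf.log.aestronglyMeasurable (max |Real.log ε| |Real.log M|) <| ae_of_all _ fun x =>
    abs_le_max_abs_abs (Real.log_le_log hε (hεf x))
      (Real.log_le_log (hε.trans_le (hεf x)) (hfM x))

theorem Nat.le_two_mul_mul_div {N k : ℕ} (hk : 0 < k) (hkN : k ≤ N) : N ≤ 2 * k * (N / k) := by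
  have hdiv := Nat.div_add_mod N k
  have hmod := Nat.mod_lt N hk
  have hpos : k ≤ k * (N / k) := Nat.le_mul_of_pos_right k (Nat.div_pos hkN hk)
  nlinarith

theorem div_natCast_div_le_two_mul_div_mul {N k : ℕ} (hk : 1 ≤ k) (hkN : k ≤ N) {C : ℝ}
    (hC : 0 ≤ C) : C / ((N / k : ℕ) : ℝ) ≤ 2 * k / N * C := by
  have hm : (0 : ℝ) < (N / k : ℕ) := by exact_mod_cast Nat.div_pos hkN hk
  have hN : (0 : ℝ) < N := by exact_mod_cast hk.trans hkN
  have hNle : (N : ℝ) ≤ 2 * k * (N / k : ℕ) := by exact_mod_cast Nat.le_two_mul_mul_div hk hkN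
  rw [div_mul_eq_mul_div, div_le_div_iff₀ hm hN]
  nlinarith

/-- If `ν` is an exchangeable probability measure on `E^N`, `μ` a probability measure on `E`,
and `∫ log F dν ≤ log ∫ F dμ^{⊗N} + C` for all bounded measurable `F > 0` on `E^N`, then for
`1 ≤ k ≤ N` and all bounded measurable `f > 0` on `E^k` one has
`∫ log f d((π_k)_*ν) ≤ log ∫ f dμ^{⊗k} + C/⌊N/k⌋`, and `C/⌊N/k⌋ ≤ (2k/N)·C`. -/
theorem marginal_log_estimate_of_exchangeable
    {E : Type*} [MeasurableSpace E] {N k : ℕ} (hk : 1 ≤ k) (hkN : k ≤ N)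
    (ν : Measure (Fin N → E)) [IsProbabilityMeasure ν]
    (hνexch : ∀ σ : Equiv.Perm (Fin N), ν.map (fun v i => v (σ i)) = ν)
    (μ : Measure E) [IsProbabilityMeasure μ]
    (C : ℝ) (hC : 0 ≤ C)
    (hyp : ∀ F : (Fin N → E) → ℝ, Measurable F → (∃ M : ℝ, ∀ v, F v ≤ M) →
      (∃ ε > (0 : ℝ), ∀ v, ε ≤ F v) →
      ∫ v, Real.log (F v) ∂ν ≤ Real.log (∫ v, F v ∂(Measure.pi fun _ : Fin N => μ)) + C) :
    ∀ f : (Fin k → E) → ℝ, Measurable f → (∃ M : ℝ, ∀ w, f w ≤ M) →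
      (∃ ε > (0 : ℝ), ∀ w, ε ≤ f w) →
      (∫ w, Real.log (f w) ∂(ν.map (fun v (i : Fin k) => v (Fin.castLE hkN i)))
          ≤ Real.log (∫ w, f w ∂(Measure.pi fun _ : Fin k => μ)) + C / (N / k : ℕ))
        ∧ C / ((N / k : ℕ) : ℝ) ≤ 2 * k / N * C := by
  rintro f hf ⟨M, hfM⟩ ⟨ε, hε, hεf⟩
  set m := N / k
  have hm : (0 : ℝ) < m := by exact_mod_cast Nat.div_pos hkN hk
  let b : Fin m × Fin k → Fin N := Fin.castLE (Nat.div_mul_le_self N k) ∘ finProdFinEquiv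
  have hb : Function.Injective b := (Fin.castLE_injective _).comp finProdFinEquiv.injective
  have hfpos (w) : 0 < f w := hε.trans_le (hεf w)
  let F : (Fin N → E) → ℝ := fun v => ∏ j, f (fun i => v (b (j, i)))
  have hFle (v) : F v ≤ M ^ m := by
    simpa [F] using Finset.prod_le_prod (s := .univ) (fun j _ => (hfpos _).le)
      fun j _ => hfM fun i => v (b (j, i))
  have hleF (v) : ε ^ m ≤ F v := by
    simpa [F] using Finset.prod_le_prod (s := .univ) (fun j _ => hε.le)
      fun j _ => hεf fun i => v (b (j, i))
  have hF := hyp F (by fun_prop) ⟨M ^ m, hFle⟩ ⟨ε ^ m, pow_pos hε m, hleF⟩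
  have hlogF : ∫ v, Real.log (F v) ∂ν
      = m * ∫ w, Real.log (f w) ∂(ν.map (fun v (i : Fin k) => v (Fin.castLE hkN i))) := by
    simp only [F, Real.log_prod fun j _ => (hfpos _).ne']
    rw [IsExchangeable.integral_sum_blocks (b := fun j i => b (j, i)) hνexch
      (fun j => hb.comp (Prod.mk_right_injective j))
      (Fin.castLE_injective hkN) (integrable_log_of_le_of_le hf hε hεf hfM), Fintype.card_fin]
  rw [hlogF, Measure.integral_prod_blocks_pi μ hb hf, Real.log_pow, Fintype.card_fin] at hF
  refine ⟨?_, div_natCast_div_le_two_mul_div_mul hk hkN hC⟩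
  rw [← sub_le_iff_le_add', le_div_iff₀ hm]
  linarith
end

section
/- Let A be a real m × m matrix and M a real m × d matrix, and suppose Kalman's rank condition holds for some integer 1 ≤ l ≤ m, i.e. the m × (ld) block matrix [M, AM, …, A^{l−1}M] has rank m. Then for every t > 0 the matrix Q_t := ∫₀^t (s(t−s)/t²) e^{−sA} M Mᵀ e^{−sAᵀ} ds is symmetric and positive definite; in particular Q_t is invertible. -/
/-!
For `x ≠ 0`, `xᵀ Q_t x = ∫₀ᵗ w(s) ‖xᵀ e^{-sA} M‖² ds` with a weight `w` positive on `(0, t)`,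
so it can only vanish if `σ ↦ xᵀ e^{σA} M` vanishes on `(-t, 0)`. Differentiating `p` times
and letting `σ → 0` then gives `xᵀ A^p M = 0` for every `p`: `x` annihilates the Kalman matrix,
whose rows are independent by the rank condition.
-/

open Matrix intervalIntegral

/-- The matrix `Q_t = ∫₀ᵗ (s(t−s)/t²) e^{−sA} M Mᵀ e^{−sAᵀ} ds`, defined entrywise. -/
noncomputable def Qmat {m d : ℕ} (A : Matrix (Fin m) (Fin m) ℝ) (M : Matrix (Fin m) (Fin d) ℝ)
    (t : ℝ) : Matrix (Fin m) (Fin m) ℝ :=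
  Matrix.of fun i j => ∫ s in (0:ℝ)..t,
    (s * (t - s) / t ^ 2) *
      (NormedSpace.exp ((-s) • A) * M * Mᵀ * NormedSpace.exp ((-s) • Aᵀ)) i j

open Set NormedSpace

section ExpSmul

variable {𝕂 𝔸 F : Type*} [RCLike 𝕂] [NormedRing 𝔸] [NormedAlgebra 𝕂 𝔸] [CompleteSpace 𝔸]
  [NormedAddCommGroup F] [NormedSpace 𝕂 F]

theorem continuous_exp_smul (b : 𝔸) : Continuous fun s : 𝕂 => exp (s • b) :=
  continuous_iff_continuousAt.2 fun s => (hasDerivAt_exp_smul_const b s).continuousAt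

theorem map_exp_smul_mul_pow_eq_zero (L : 𝔸 →L[𝕂] F) (b : 𝔸) {U : Set 𝕂} (hU : IsOpen U)
    (h : ∀ s ∈ U, L (exp (s • b)) = 0) (p : ℕ) : ∀ s ∈ U, L (exp (s • b) * b ^ p) = 0 := by
  induction p generalizing L with
  | zero => simpa using h
  | succ p ih =>
    -- the derivative of `s ↦ L (exp (s • b))` vanishes wherever the function is locally zero
    have hderiv : ∀ s ∈ U, L (exp (s • b) * b) = 0 := fun s hs =>
      (L.hasFDerivAt.comp_hasDerivAt s (hasDerivAt_exp_smul_const b s)).unique <|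
        (hasDerivAt_const s 0).congr_of_eventuallyEq <|
          Filter.eventually_of_mem (hU.mem_nhds hs) h
    simpa [pow_succ, ← mul_assoc] using ih (L.comp (ContinuousLinearMap.mul 𝕂 𝔸 |>.flip b)) hderiv

theorem map_pow_eq_zero_of_map_exp_smul_eq_zero (L : 𝔸 →L[𝕂] F) (b : 𝔸) {U : Set 𝕂}
    (hU : IsOpen U) (h0 : 0 ∈ closure U) (h : ∀ s ∈ U, L (exp (s • b)) = 0) (p : ℕ) :
    L (b ^ p) = 0 := by
  have hcont : Continuous fun s : 𝕂 => L (exp (s • b) * b ^ p) :=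
    L.continuous.comp <| (continuous_exp_smul b).mul continuous_const
  simpa using (Set.EqOn.closure (map_exp_smul_mul_pow_eq_zero L b hU h p) hcont
    continuous_const) h0

end ExpSmul

theorem Matrix.vecMul_injective_of_rank_eq_card {K m n : Type*} [Field K] [Fintype m]
    [Fintype n] {B : Matrix m n K} (hB : B.rank = Fintype.card m) : Function.Injective B.vecMul :=
  vecMul_injective_iff.2 <| linearIndependent_iff_card_eq_finrank_span.2 <| by
    rw [← hB, rank_eq_finrank_span_row, Set.finrank]

/-- The Kalman matrix `[M, AM, …, A^{l−1}M]`, its columns indexed by (power, column of `M`). -/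
def kalmanMatrix {R n k : Type*} [Semiring R] [Fintype n] [DecidableEq n]
    (A : Matrix n n R) (M : Matrix n k R) (l : ℕ) : Matrix n (Fin l × k) R :=
  of fun i p => (A ^ (p.1 : ℕ) * M) i p.2

section Kalman

variable {n k : Type*} [Fintype n] [DecidableEq n] [Fintype k]

theorem eq_zero_of_vecMul_pow_mul_eq_zero {A : Matrix n n ℝ} {M : Matrix n k ℝ} {l : ℕ}
    (hK : (kalmanMatrix A M l).rank = Fintype.card n) {x : n → ℝ}
    (h : ∀ p : ℕ, x ᵥ* (A ^ p * M) = 0) : x = 0 :=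
  vecMul_injective_of_rank_eq_card hK <| by
    ext ⟨p, j⟩
    simpa [kalmanMatrix, vecMul, dotProduct] using congrFun (h p) j

-- any Banach-algebra norm induces the product topology, which is all `exp` depends on
attribute [local instance] Matrix.linftyOpNormedRing Matrix.linftyOpNormedAlgebra

theorem Matrix.continuous_exp_smul (A : Matrix n n ℝ) : Continuous fun s : ℝ => exp (s • A) :=
  _root_.continuous_exp_smul A

theorem eq_zero_of_vecMul_exp_smul_mul_eq_zero {A : Matrix n n ℝ} {M : Matrix n k ℝ} {l : ℕ}
    (hK : (kalmanMatrix A M l).rank = Fintype.card n) {U : Set ℝ} (hU : IsOpen U)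
    (h0 : 0 ∈ closure U) {x : n → ℝ} (h : ∀ s ∈ U, x ᵥ* (exp (s • A) * M) = 0) : x = 0 := by
  let L : Matrix n n ℝ →L[ℝ] k → ℝ :=
    LinearMap.toContinuousLinearMap (vecMulLinear M ∘ₗ vecMulBilin ℝ ℝ x)
  have hL : ∀ N, L N = x ᵥ* (N * M) := fun N => vecMul_vecMul x N M
  refine eq_zero_of_vecMul_pow_mul_eq_zero hK fun p => ?_
  rw [← hL]
  exact map_pow_eq_zero_of_map_exp_smul_eq_zero L A hU h0 (fun s hs => (hL _).trans (h s hs)) p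

end Kalman

section Gram

variable {n k : Type*} [Fintype n] [Fintype k]

theorem dotProduct_mulVec_of_integral {F : ℝ → n → n → ℝ} {a b : ℝ}
    (hF : ∀ i j, IntervalIntegrable (fun s => F s i j) MeasureTheory.volume a b) (x y : n → ℝ) :
    x ⬝ᵥ (of (fun i j => ∫ s in a..b, F s i j) *ᵥ y) = ∫ s in a..b, x ⬝ᵥ (of (F s) *ᵥ y) := by
  have hint : ∀ i j,
      IntervalIntegrable (fun s => x i * (F s i j * y j)) MeasureTheory.volume a b :=
    fun i j => ((hF i j).mul_const _).const_mul _
  simp only [dotProduct, mulVec, of_apply, Finset.mul_sum]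
  have hint_sum : ∀ i, IntervalIntegrable (fun s => ∑ j, x i * (F s i j * y j))
      MeasureTheory.volume a b := fun i => by
    simpa only [Finset.sum_fn] using IntervalIntegrable.sum Finset.univ fun j _ => hint i j
  rw [integral_finsetSum fun i _ => hint_sum i]
  refine Finset.sum_congr rfl fun i _ => ?_
  rw [integral_finsetSum fun j _ => hint i j]
  simp only [integral_const_mul, integral_mul_const]

theorem posDef_of_integral_gram {P : ℝ → Matrix n k ℝ} (hP : Continuous P) {w : ℝ → ℝ}
    (hw : Continuous w) {a b : ℝ} (hab : a < b) (hw_pos : ∀ s ∈ Ioo a b, 0 < w s)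
    (hP_inj : ∀ x : n → ℝ, (∀ s ∈ Ioo a b, x ᵥ* P s = 0) → x = 0) :
    (of fun i j => ∫ s in a..b, w s * (P s * (P s)ᵀ) i j).PosDef := by
  have hG : ∀ i j, Continuous fun s => w s * (P s * (P s)ᵀ) i j := fun i j =>
    hw.mul ((hP.matrix_mul hP.matrix_transpose).matrix_elem i j)
  have hw_nonneg : Icc a b ⊆ {s | 0 ≤ w s} := closure_Ioo hab.ne ▸
    closure_minimal (fun s hs => (hw_pos s hs).le) (isClosed_le continuous_const hw)
  have hquad : ∀ x s, x ⬝ᵥ (of (fun i j => w s * (P s * (P s)ᵀ) i j) *ᵥ x)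
      = w s * ((x ᵥ* P s) ⬝ᵥ (x ᵥ* P s)) := fun x s => by
    rw [show of (fun i j => w s * (P s * (P s)ᵀ) i j) = w s • (P s * (P s)ᵀ) from rfl,
      smul_mulVec, dotProduct_smul, ← mulVec_mulVec, dotProduct_mulVec, mulVec_transpose,
      smul_eq_mul]
  refine PosDef.of_dotProduct_mulVec_pos ?_ fun x hx => ?_
  · ext i j
    simp only [conjTranspose_apply, star_trivial, of_apply, mul_apply, transpose_apply, mul_comm]
  · obtain ⟨s, hs, hxs⟩ : ∃ s ∈ Ioo a b, x ᵥ* P s ≠ 0 := by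
      by_contra! h
      exact hx (hP_inj x h)
    rw [star_trivial, dotProduct_mulVec_of_integral fun i j => (hG i j).intervalIntegrable a b]
    simp_rw [hquad]
    refine integral_pos hab (by fun_prop) (fun s hs => ?_) ⟨s, Ioo_subset_Icc_self hs, ?_⟩
    · exact mul_nonneg (hw_nonneg (Ioc_subset_Icc_self hs))
        (by simpa using dotProduct_self_star_nonneg (x ᵥ* P s))
    · exact mul_pos (hw_pos s hs) (by simpa using dotProduct_self_star_pos_iff.2 hxs)

end Gram

theorem qmat_posDef_of_kalman_general {m d : ℕ} (l : ℕ)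
    (A : Matrix (Fin m) (Fin m) ℝ) (M : Matrix (Fin m) (Fin d) ℝ)
    (hKalman :
      (Matrix.of fun (i : Fin m) (p : Fin l × Fin d) => (A ^ (p.1 : ℕ) * M) i p.2).rank = m) :
    ∀ t : ℝ, 0 < t → (Qmat A M t).IsSymm ∧ (Qmat A M t).PosDef ∧ IsUnit (Qmat A M t) := by
  intro t ht
  set P : ℝ → Matrix (Fin m) (Fin d) ℝ := fun s => exp ((-s) • A) * M
  have hQ : Qmat A M t =
      of fun i j => ∫ s in (0 : ℝ)..t, s * (t - s) / t ^ 2 * (P s * (P s)ᵀ) i j := by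
    unfold Qmat
    congr! 5 with i j s
    rw [← transpose_smul, exp_transpose]
    simp only [P, transpose_mul, Matrix.mul_assoc]
  have hK : (kalmanMatrix A M l).rank = Fintype.card (Fin m) :=
    hKalman.trans (Fintype.card_fin m).symm
  -- `exp ((-s) • A)` for `s ∈ (0, t)` is `exp (σ • A)` for `σ ∈ (-t, 0)`, an interval adherent to 0
  have h0 : (0 : ℝ) ∈ closure (Ioo (-t) 0) := by
    rw [closure_Ioo (neg_lt_zero.2 ht).ne]
    exact right_mem_Icc.2 (neg_lt_zero.2 ht).le
  have hpos : (Qmat A M t).PosDef := hQ ▸ posDef_of_integral_gram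
    (((Matrix.continuous_exp_smul A).comp continuous_neg).matrix_mul continuous_const)
    (by fun_prop) ht (fun s hs => div_pos (mul_pos hs.1 (sub_pos.2 hs.2)) (by positivity))
    fun x hx => eq_zero_of_vecMul_exp_smul_mul_eq_zero hK isOpen_Ioo h0 fun σ hσ => by
      simpa using hx (-σ) ⟨neg_pos.2 hσ.2, neg_lt.1 hσ.1⟩
  exact ⟨isHermitian_iff_isSymm.1 hpos.isHermitian, hpos, hpos.isUnit⟩

/-- If Kalman's rank condition `Rank[M, AM, …, A^{l−1}M] = m` holds for some `1 ≤ l ≤ m`,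
then for every `t > 0` the matrix `Q_t` is symmetric, positive definite, and invertible. -/
theorem qmat_posDef_of_kalman {m d : ℕ} (l : ℕ) (hl1 : 1 ≤ l) (hlm : l ≤ m)
    (A : Matrix (Fin m) (Fin m) ℝ) (M : Matrix (Fin m) (Fin d) ℝ)
    (hKalman :
      (Matrix.of fun (i : Fin m) (p : Fin l × Fin d) => (A ^ (p.1 : ℕ) * M) i p.2).rank = m) :
    ∀ t : ℝ, 0 < t → (Qmat A M t).IsSymm ∧ (Qmat A M t).PosDef ∧ IsUnit (Qmat A M t) :=
  qmat_posDef_of_kalman_general l A M hKalman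
end

section
/- Let A be a real m × m matrix, M a real m × d matrix, t₀ > 0, and suppose the matrix Q_{t₀} := ∫₀^{t₀} (s(t₀−s)/t₀²) e^{−sA} M Mᵀ e^{−sAᵀ} ds is invertible. Let v¹ ∈ ℝ^m, v² ∈ ℝ^d, and let φ : [0, t₀] → ℝ^d be continuous with φ(0) = 0. Define V := ∫₀^{t₀} e^{−rA} M [ ((t₀−r)/t₀) v² − (r/t₀) φ(t₀) + φ(r) ] dr and α(s) := (s/t₀)(−φ(t₀) − v²) − (s(t₀−s)/t₀²) Mᵀ e^{−sAᵀ} Q_{t₀}^{−1} (v¹ + V) for s ∈ [0, t₀]. Then v² + α(t₀) + φ(t₀) = 0 and e^{A t₀} v¹ + ∫₀^{t₀} e^{A(t₀−s)} M [ v² + α(s) + φ(s) ] ds = 0. -/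
open Matrix intervalIntegral

/-!
Since `e^{(t₀-s)A} = e^{t₀A} e^{-sA}`, the control `v² + α + φ` splits the integral as
`e^{t₀A} (V - ∫₀^{t₀} (s(t₀-s)/t₀²) e^{-sA} M Mᵀ e^{-sAᵀ} w ds)` with `w = Q_{t₀}⁻¹ (v¹ + V)`.
The subtracted integral is `Q_{t₀} w = v¹ + V` by the very definition of `Q_{t₀}`, so the state
`e^{t₀A} v¹` is cancelled exactly.
-/

theorem ContinuousOn.matrix_mulVec {X R m n : Type*} [TopologicalSpace X] [Fintype n]
    [NonUnitalNonAssocSemiring R] [TopologicalSpace R] [ContinuousAdd R] [ContinuousMul R]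
    {B : X → Matrix m n R} {v : X → n → R} {s : Set X}
    (hB : ContinuousOn B s) (hv : ContinuousOn v s) :
    ContinuousOn (fun x => B x *ᵥ v x) s :=
  (continuous_fst.matrix_mulVec continuous_snd).comp_continuousOn (hB.prodMk hv)

section Exp

attribute [local instance] Matrix.linftyOpNormedRing Matrix.linftyOpNormedAlgebra

variable {m : Type*} [Fintype m] [DecidableEq m]

theorem Continuous.matrix_exp_smul {X : Type*} [TopologicalSpace X] {f : X → ℝ}
    (hf : Continuous f) (A : Matrix m m ℝ) :
    Continuous fun x => NormedSpace.exp (f x • A) :=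
  NormedSpace.exp_continuous.comp (hf.smul continuous_const)

theorem Matrix.exp_sub_smul (A : Matrix m m ℝ) (t s : ℝ) :
    NormedSpace.exp ((t - s) • A) = NormedSpace.exp (t • A) * NormedSpace.exp ((-s) • A) := by
  rw [sub_eq_add_neg, add_smul, exp_add_of_commute]
  exact ((Commute.refl A).smul_left t).smul_right (-s)

end Exp

namespace Matrix

variable {m n : Type*} [Fintype m] [Fintype n]

theorem mulVec_intervalIntegral (B : Matrix m n ℝ) {f : ℝ → n → ℝ} {a b : ℝ}
    {μ : MeasureTheory.Measure ℝ} (hf : IntervalIntegrable f μ a b) :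
    B *ᵥ (∫ s in a..b, f s ∂μ) = ∫ s in a..b, B *ᵥ f s ∂μ :=
  ((mulVecLin B).toContinuousLinearMap.intervalIntegral_comp_comm hf).symm

theorem intervalIntegral_mulVec_const {G : ℝ → Matrix m n ℝ} (hG : Continuous G)
    (w : n → ℝ) (a b : ℝ) :
    ∫ s in a..b, G s *ᵥ w = (of fun i j => ∫ s in a..b, G s i j) *ᵥ w := by
  ext i
  have hentry : ∀ j, Continuous fun s => G s i j := fun j =>
    (continuous_apply j).comp ((continuous_apply i).comp hG)
  rw [← ContinuousLinearMap.proj_apply (R := ℝ) i (∫ s in a..b, G s *ᵥ w),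
    ← ContinuousLinearMap.intervalIntegral_comp_comm _
      ((hG.matrix_mulVec continuous_const).intervalIntegrable a b)]
  simp only [ContinuousLinearMap.proj_apply, mulVec, dotProduct, of_apply]
  refine (integral_finsetSum fun j _ =>
    ((hentry j).mul continuous_const).intervalIntegrable a b).trans ?_
  exact Finset.sum_congr rfl fun j _ => integral_mul_const _ _

end Matrix

section Qmat

variable {m d : ℕ} (A : Matrix (Fin m) (Fin m) ℝ) (M : Matrix (Fin m) (Fin d) ℝ) (t : ℝ)

theorem continuous_Qmat_integrand : Continuous fun s : ℝ => (s * (t - s) / t ^ 2) •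
    (NormedSpace.exp ((-s) • A) * M * Mᵀ * NormedSpace.exp ((-s) • Aᵀ)) := by
  have hcoef : Continuous fun s : ℝ => s * (t - s) / t ^ 2 := by fun_prop
  exact hcoef.smul (((continuous_neg.matrix_exp_smul A).matrix_mul continuous_const).matrix_mul
    continuous_const |>.matrix_mul (continuous_neg.matrix_exp_smul Aᵀ))

theorem Qmat_integrand_mulVec (w : Fin m → ℝ) (s : ℝ) :
    (NormedSpace.exp ((-s) • A) * M) *ᵥ
      ((s * (t - s) / t ^ 2) • (Mᵀ * NormedSpace.exp ((-s) • Aᵀ)) *ᵥ w) =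
    ((s * (t - s) / t ^ 2) •
      (NormedSpace.exp ((-s) • A) * M * Mᵀ * NormedSpace.exp ((-s) • Aᵀ))) *ᵥ w := by
  rw [mulVec_smul, mulVec_mulVec, smul_mulVec, Matrix.mul_assoc, Matrix.mul_assoc,
    Matrix.mul_assoc]

theorem intervalIntegrable_Qmat_integrand_mulVec (w : Fin m → ℝ) (a b : ℝ) :
    IntervalIntegrable (fun s : ℝ => (NormedSpace.exp ((-s) • A) * M) *ᵥ
      ((s * (t - s) / t ^ 2) • (Mᵀ * NormedSpace.exp ((-s) • Aᵀ)) *ᵥ w))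
      MeasureTheory.volume a b := by
  simp only [Qmat_integrand_mulVec]
  exact ((continuous_Qmat_integrand A M t).matrix_mulVec continuous_const).intervalIntegrable a b

theorem Qmat_mulVec_eq_intervalIntegral (w : Fin m → ℝ) :
    Qmat A M t *ᵥ w = ∫ s in (0:ℝ)..t, (NormedSpace.exp ((-s) • A) * M) *ᵥ
      ((s * (t - s) / t ^ 2) • (Mᵀ * NormedSpace.exp ((-s) • Aᵀ)) *ᵥ w) := by
  simp only [Qmat_integrand_mulVec, intervalIntegral_mulVec_const (continuous_Qmat_integrand A M t)]
  rfl

end Qmat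

theorem control_identity_general {m d : ℕ}
    (A : Matrix (Fin m) (Fin m) ℝ) (M : Matrix (Fin m) (Fin d) ℝ)
    (t₀ : ℝ) (ht₀ : 0 < t₀) (hQ : IsUnit (Qmat A M t₀))
    (v1 : Fin m → ℝ) (v2 : Fin d → ℝ)
    (φ : ℝ → Fin d → ℝ) (hφ : ContinuousOn φ (Set.Icc 0 t₀))
    (V : Fin m → ℝ)
    (hV : V = ∫ r in (0:ℝ)..t₀, (NormedSpace.exp ((-r) • A) * M).mulVec
        (((t₀ - r) / t₀) • v2 - (r / t₀) • φ t₀ + φ r))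
    (α : ℝ → Fin d → ℝ)
    (hα : ∀ s : ℝ, α s = (s / t₀) • (-φ t₀ - v2) -
        (s * (t₀ - s) / t₀ ^ 2) •
          (Mᵀ * NormedSpace.exp ((-s) • Aᵀ) * (Qmat A M t₀)⁻¹).mulVec (v1 + V)) :
    v2 + α t₀ + φ t₀ = 0 ∧
    (NormedSpace.exp (t₀ • A)).mulVec v1 +
        (∫ s in (0:ℝ)..t₀,
          (NormedSpace.exp ((t₀ - s) • A) * M).mulVec (v2 + α s + φ s)) = 0 := by
  set E : ℝ → Matrix (Fin m) (Fin d) ℝ := fun s => NormedSpace.exp ((-s) • A) * M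
  set w := (Qmat A M t₀)⁻¹ *ᵥ (v1 + V)
  set g : ℝ → Fin d → ℝ := fun r => ((t₀ - r) / t₀) • v2 - (r / t₀) • φ t₀ + φ r
  set h : ℝ → Fin d → ℝ := fun s =>
    (s * (t₀ - s) / t₀ ^ 2) • (Mᵀ * NormedSpace.exp ((-s) • Aᵀ)) *ᵥ w
  have hQw : Qmat A M t₀ *ᵥ w = v1 + V := by
    rw [mulVec_mulVec, mul_nonsing_inv _ ((isUnit_iff_isUnit_det _).mp hQ), one_mulVec]
  have hcontrol : ∀ s, v2 + α s + φ s = g s - h s := by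
    intro s
    rw [hα, ← mulVec_mulVec]
    ext i
    simp only [g, h, Pi.add_apply, Pi.sub_apply, Pi.smul_apply, Pi.neg_apply, smul_eq_mul]
    field_simp
    ring
  have hE : Continuous E := (continuous_neg.matrix_exp_smul A).matrix_mul continuous_const
  have hg : IntervalIntegrable (fun r => E r *ᵥ g r) MeasureTheory.volume 0 t₀ := by
    refine (hE.continuousOn.matrix_mulVec ?_).intervalIntegrable
    rw [Set.uIcc_of_le ht₀.le]
    exact (Continuous.continuousOn (by fun_prop)).add hφ
  have hh : IntervalIntegrable (fun s => E s *ᵥ h s) MeasureTheory.volume 0 t₀ :=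
    intervalIntegrable_Qmat_integrand_mulVec A M t₀ w 0 t₀
  refine ⟨by simp [hα, ht₀.ne'], ?_⟩
  calc NormedSpace.exp (t₀ • A) *ᵥ v1 + ∫ s in (0:ℝ)..t₀,
        (NormedSpace.exp ((t₀ - s) • A) * M) *ᵥ (v2 + α s + φ s)
      = NormedSpace.exp (t₀ • A) *ᵥ v1 +
          NormedSpace.exp (t₀ • A) *ᵥ ∫ s in (0:ℝ)..t₀, (E s *ᵥ g s - E s *ᵥ h s) := by
        rw [mulVec_intervalIntegral _ (hg.sub hh)]
        simp only [hcontrol, exp_sub_smul, E, mulVec_sub, mulVec_mulVec, Matrix.mul_assoc]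
    _ = NormedSpace.exp (t₀ • A) *ᵥ (v1 + (V - Qmat A M t₀ *ᵥ w)) := by
        rw [integral_sub hg hh, hV, Qmat_mulVec_eq_intervalIntegral, mulVec_add]
    _ = 0 := by
        rw [hQw, sub_add_cancel_right, add_neg_cancel, mulVec_zero]

/-- With `Q_{t₀}` invertible, `v¹ ∈ ℝ^m`, `v² ∈ ℝ^d`, `φ : [0,t₀] → ℝ^d` continuous with
`φ(0) = 0`, and
`V := ∫₀^{t₀} e^{−rA} M [((t₀−r)/t₀) v² − (r/t₀) φ(t₀) + φ(r)] dr`,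
`α(s) := (s/t₀)(−φ(t₀) − v²) − (s(t₀−s)/t₀²) Mᵀ e^{−sAᵀ} Q_{t₀}^{−1}(v¹ + V)`,
one has `v² + α(t₀) + φ(t₀) = 0` and
`e^{At₀}v¹ + ∫₀^{t₀} e^{A(t₀−s)} M [v² + α(s) + φ(s)] ds = 0`. -/
theorem control_identity {m d : ℕ}
    (A : Matrix (Fin m) (Fin m) ℝ) (M : Matrix (Fin m) (Fin d) ℝ)
    (t₀ : ℝ) (ht₀ : 0 < t₀) (hQ : IsUnit (Qmat A M t₀))
    (v1 : Fin m → ℝ) (v2 : Fin d → ℝ)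
    (φ : ℝ → Fin d → ℝ) (hφ : ContinuousOn φ (Set.Icc 0 t₀)) (hφ0 : φ 0 = 0)
    (V : Fin m → ℝ)
    (hV : V = ∫ r in (0:ℝ)..t₀, (NormedSpace.exp ((-r) • A) * M).mulVec
        (((t₀ - r) / t₀) • v2 - (r / t₀) • φ t₀ + φ r))
    (α : ℝ → Fin d → ℝ)
    (hα : ∀ s : ℝ, α s = (s / t₀) • (-φ t₀ - v2) -
        (s * (t₀ - s) / t₀ ^ 2) •
          (Mᵀ * NormedSpace.exp ((-s) • Aᵀ) * (Qmat A M t₀)⁻¹).mulVec (v1 + V)) :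
    v2 + α t₀ + φ t₀ = 0 ∧
    (NormedSpace.exp (t₀ • A)).mulVec v1 +
        (∫ s in (0:ℝ)..t₀,
          (NormedSpace.exp ((t₀ - s) • A) * M).mulVec (v2 + α s + φ s)) = 0 :=
  control_identity_general A M t₀ ht₀ hQ v1 v2 φ hφ V hV α hα
end
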